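/- (Main theorem: constant iteration complexity of empirical EM, Theorem 4.) Let r = ‖θ*‖/14, δ ∈ (0,1), and set ε_ℓ = √(‖θ*‖² + σ²)·√((d + log(1/δ))/(mn)). Assume snr ≥ 4, mn ≥ 192²·(d + log(8/δ)), and n ≥ 64·log m + 104·(2d + log(4/δ)). Assume further there exist constants C_κ > 0 and C_ε ≥ 1 such that: (a) exp(−C_κ·n) ≤ 1/2 and for every θ with ε_ℓ ≤ ‖θ − θ*‖ ≤ r one has ‖M(θ) − θ*‖ ≤ exp(−C_κ·n)·‖θ − θ*‖; (b) with probability at least 1 − δ, Σ̂ is invertible and sup over θ with ε_ℓ ≤ ‖θ − θ*‖ ≤ r of ‖M_m(θ) − M(θ)‖ is at most C_ε·ε_ℓ; and (c) 4·C_ε·ε_ℓ ≤ r/2. Let θ₀ satisfy ‖θ₀ − θ*‖ ≤ r and define θ_{t+1} = M_m(θ_t). Then for T = ⌈1 + (1/(2·C_κ·n))·log(mn·‖θ*‖² / (28·C_ε·(‖θ*‖² + σ²)·(d + log(1/δ))))⌉, with probability at least 1 − δ, either there exists an iterate 0 ≤ t ≤ T with ‖θ_t − θ*‖ ≤ ε_ℓ,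 or ‖θ_T − θ*‖ ≤ 4·C_ε·ε_ℓ. -/

import Mathlib

open MeasureTheory ProbabilityTheory Real
open scoped ENNReal NNReal BigOperators RealInnerProductSpace

noncomputable section

abbrev Vec (d : ℕ) := EuclideanSpace ℝ (Fin d)

/-- Standard Gaussian measure on `EuclideanSpace ℝ (Fin d)`. -/
def stdGaussian (d : ℕ) : Measure (Vec d) :=
  (Measure.pi fun _ : Fin d => gaussianReal 0 1).map
    (MeasurableEquiv.toLp 2 (Fin d → ℝ))

instance (d : ℕ) : IsProbabilityMeasure (stdGaussian d) :=
  Measure.isProbabilityMeasure_map (MeasurableEquiv.measurable _).aemeasurable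

abbrev Samp (d n : ℕ) := (Fin n → Vec d) × (Fin n → ℝ)

def jointMeasure (d n : ℕ) (σ : ℝ) : Measure (Samp d n) :=
  (Measure.pi fun _ : Fin n => stdGaussian d).prod
    (Measure.pi fun _ : Fin n => gaussianReal 0 ⟨σ ^ 2, sq_nonneg σ⟩)

instance (d n : ℕ) (σ : ℝ) : IsProbabilityMeasure (jointMeasure d n σ) := by
  unfold jointMeasure
  have := instIsProbabilityMeasureGaussianReal 0 ⟨σ ^ 2, sq_nonneg σ⟩
  infer_instance

/-- The response variable `Yᵢ = ⟨Xᵢ, θ*⟩ + εᵢ`. -/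
def Yv {d n : ℕ} (θs : Vec d) (i : Fin n) (ω : Samp d n) : ℝ :=
  ⟪ω.1 i, θs⟫ + ω.2 i

/-- `Z = ∑ᵢ Xᵢ Yᵢ`. -/
def Zv {d n : ℕ} (θs : Vec d) (ω : Samp d n) : Vec d :=
  ∑ i, Yv θs i ω • ω.1 i

/-- The population EM map `M(θ) = 𝔼[X₁ Y₁ tanh(σ⁻² ∑ᵢ ⟨Xᵢ,θ⟩Yᵢ)]`. -/
def Mpop (d n : ℕ) (hn : 0 < n) (θs : Vec d) (σ : ℝ) (θ : Vec d) : Vec d :=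
  ∫ ω, (Yv θs ⟨0, hn⟩ ω *
      Real.tanh (1 / σ ^ 2 * ∑ i, ⟪ω.1 i, θ⟫ * Yv θs i ω)) • ω.1 ⟨0, hn⟩
    ∂ jointMeasure d n σ


instance (d n : ℕ) : IsProbabilityMeasure (Measure.pi fun _ : Fin n => stdGaussian d) := by
  infer_instance

instance (n : ℕ) (σ : ℝ) :
    IsProbabilityMeasure (Measure.pi fun _ : Fin n => gaussianReal 0 ⟨σ ^ 2, sq_nonneg σ⟩) := by
  have := instIsProbabilityMeasureGaussianReal 0 ⟨σ ^ 2, sq_nonneg σ⟩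
  infer_instance

/-- Sample space for `m` nodes each with `n` covariate/noise pairs. -/
abbrev MSamp (d m n : ℕ) := (Fin m → Fin n → Vec d) × (Fin m → Fin n → ℝ)

def multiMeasure (d m n : ℕ) (σ : ℝ) : Measure (MSamp d m n) :=
  (Measure.pi fun _ : Fin m => Measure.pi fun _ : Fin n => stdGaussian d).prod
    (Measure.pi fun _ : Fin m => Measure.pi fun _ : Fin n =>
      gaussianReal 0 ⟨σ ^ 2, sq_nonneg σ⟩)

instance (d m n : ℕ) (σ : ℝ) : IsProbabilityMeasure (multiMeasure d m n σ) := by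
  unfold multiMeasure
  constructor
  rw [← Set.univ_prod_univ, Measure.prod_prod]
  simp [measure_univ]

/-- The response `y_i^j = ⟨x_i^j, θ*⟩ + ε_i^j`. -/
def yv {d m n : ℕ} (θs : Vec d) (j : Fin m) (i : Fin n) (ω : MSamp d m n) : ℝ :=
  ⟪ω.1 j i, θs⟫ + ω.2 j i

/-- `Z^j = ∑ᵢ x_i^j y_i^j`. -/
def Zj {d m n : ℕ} (θs : Vec d) (j : Fin m) (ω : MSamp d m n) : Vec d :=
  ∑ i, yv θs j i ω • ω.1 j i

/-- The sample covariance `Σ̂ = (mn)⁻¹ ∑_j ∑_i x_i^j (x_i^j)ᵀ`. -/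
def covM {d m n : ℕ} (ω : MSamp d m n) : Matrix (Fin d) (Fin d) ℝ :=
  fun a b => ((m * n : ℕ) : ℝ)⁻¹ * ∑ j, ∑ i, ω.1 j i a * ω.1 j i b

/-- The empirical EM map `M_m(θ) = Σ̂⁻¹ (mn)⁻¹ ∑_j Z^j tanh(σ⁻² ⟨Z^j, θ⟩)`. -/
def Mm {d m n : ℕ} (θs : Vec d) (σ : ℝ) (ω : MSamp d m n) (θ : Vec d) : Vec d :=
  (EuclideanSpace.equiv (Fin d) ℝ).symm
    ((covM ω)⁻¹.mulVec fun a =>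
      ((m * n : ℕ) : ℝ)⁻¹ * ∑ j, Real.tanh (1 / σ ^ 2 * ⟪Zj θs j ω, θ⟫) * Zj θs j ω a)

/-- The iterates of the empirical EM algorithm started at `θ₀`. -/
def EMseq {d m n : ℕ} (θs : Vec d) (σ : ℝ) (θ₀ : Vec d) (ω : MSamp d m n) : ℕ → Vec d
  | 0 => θ₀
  | t + 1 => Mm θs σ ω (EMseq θs σ θ₀ ω t)

/-- The statistical accuracy `ε_ℓ = √(‖θ*‖² + σ²) √((d + log(1/δ))/(mn))`. -/
def epsl (d m n : ℕ) (θs : Vec d) (σ δ : ℝ) : ℝ :=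
  Real.sqrt (‖θs‖ ^ 2 + σ ^ 2) * Real.sqrt (((d : ℝ) + Real.log (1 / δ)) / ((m * n : ℕ) : ℝ))

/-!
On the event of (b), one step of empirical EM from a point of the shell
`ε_ℓ ≤ ‖θ - θ*‖ ≤ r` is the population step, which contracts by `κ = exp(-Cκ n) ≤ 1/2`,
perturbed by at most `η = Cε ε_ℓ`. As long as the iterates stay outside the ball of radius `ε_ℓ`
they therefore stay in the shell and satisfy `‖θ_t - θ*‖ ≤ κ^t r + η / (1 - κ) ≤ κ^t r + 2η`,
and `T` is chosen so that `κ^T r ≤ 2η`.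
-/

section PerturbedContraction

theorem le_pow_mul_add_div_of_le_add_mul {e : ℕ → ℝ} {κ η : ℝ} (hκ0 : 0 ≤ κ) (hκ1 : κ < 1)
    (hη : 0 ≤ η) {T : ℕ} (he : ∀ t < T, e (t + 1) ≤ η + κ * e t) :
    e T ≤ κ ^ T * e 0 + η / (1 - κ) := by
  have hκ1' : 0 < 1 - κ := sub_pos.2 hκ1
  induction T with
  | zero => simpa using div_nonneg hη hκ1'.le
  | succ T ih =>
    calc e (T + 1) ≤ η + κ * e T := he T T.lt_succ_self
      _ ≤ η + κ * (κ ^ T * e 0 + η / (1 - κ)) := by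
          gcongr
          exact ih fun t ht => he t (ht.trans T.lt_succ_self)
      _ = κ ^ (T + 1) * e 0 + η / (1 - κ) := by
          field_simp
          ring

variable {E : Type*} [SeminormedAddCommGroup E] {F G : E → E} {θ : E} {κ η ε r : ℝ}

theorem norm_sub_le_of_perturbed_contraction {x : ℕ → E} (hx : ∀ t, x (t + 1) = F (x t))
    (hκ0 : 0 ≤ κ) (hκ1 : κ < 1) (hη : 0 ≤ η) (hηr : η ≤ (1 - κ) * r)
    (hG : ∀ y, ε ≤ ‖y - θ‖ → ‖y - θ‖ ≤ r → ‖G y - θ‖ ≤ κ * ‖y - θ‖)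
    (hFG : ∀ y, ε ≤ ‖y - θ‖ → ‖y - θ‖ ≤ r → ‖F y - G y‖ ≤ η)
    (hx0 : ‖x 0 - θ‖ ≤ r) {T : ℕ} (hfar : ∀ t < T, ε ≤ ‖x t - θ‖) :
    ‖x T - θ‖ ≤ κ ^ T * r + η / (1 - κ) := by
  have step : ∀ t < T, ‖x t - θ‖ ≤ r → ‖x (t + 1) - θ‖ ≤ η + κ * ‖x t - θ‖ := by
    intro t ht hr
    calc ‖x (t + 1) - θ‖ = ‖(F (x t) - G (x t)) + (G (x t) - θ)‖ := by rw [hx]; abel_nf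
      _ ≤ η + κ * ‖x t - θ‖ :=
          (norm_add_le _ _).trans (add_le_add (hFG _ (hfar t ht) hr) (hG _ (hfar t ht) hr))
  have inShell : ∀ t ≤ T, ‖x t - θ‖ ≤ r := by
    intro t
    induction t with
    | zero => exact fun _ => hx0
    | succ t ih =>
      intro ht
      have hr := ih (Nat.le_of_succ_le ht)
      calc ‖x (t + 1) - θ‖ ≤ η + κ * ‖x t - θ‖ := step t ht hr
        _ ≤ η + κ * r := by gcongr
        _ ≤ r := by linarith
  calc ‖x T - θ‖ ≤ κ ^ T * ‖x 0 - θ‖ + η / (1 - κ) :=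
        le_pow_mul_add_div_of_le_add_mul (e := fun t => ‖x t - θ‖) hκ0 hκ1 hη
          fun t ht => step t ht (inShell t ht.le)
    _ ≤ κ ^ T * r + η / (1 - κ) := by gcongr

end PerturbedContraction

theorem exp_neg_pow_mul_le {c r y : ℝ} {T : ℕ} (hy : 0 < y) (hT : log (r / y) ≤ c * T) :
    exp (-c) ^ T * r ≤ y := by
  have hr : r ≤ y * exp (c * T) :=
    calc r = y * (r / y) := by field_simp
      _ ≤ y * exp (log (r / y)) := by gcongr; exact le_exp_log _
      _ ≤ y * exp (c * T) := by gcongr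
  rw [← exp_nat_mul, show (T : ℝ) * -c = -(c * T) by ring, exp_neg, inv_mul_le_iff₀ (exp_pos _)]
  exact hr.trans_eq (mul_comm _ _)

theorem log_le_mul_natCeil {c s K : ℝ} (hc : 0 < c) (hs : 0 < s) (hK : 1 ≤ K) :
    log s ≤ c * ⌈1 + 1 / (2 * c) * log (s ^ 2 * K)⌉₊ := by
  have hlog : 2 * log s ≤ log (s ^ 2 * K) := by
    rw [log_mul (by positivity) (by positivity), log_pow]
    push_cast
    linarith [log_nonneg hK]
  have hmul : c * (1 + 1 / (2 * c) * log (s ^ 2 * K)) = c + log (s ^ 2 * K) / 2 := by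
    field_simp
  calc log s ≤ c * (1 + 1 / (2 * c) * log (s ^ 2 * K)) := by rw [hmul]; linarith
    _ ≤ c * ⌈1 + 1 / (2 * c) * log (s ^ 2 * K)⌉₊ := by gcongr; exact Nat.le_ceil _

section Accuracy

variable {d m n : ℕ} {θs : Vec d} {σ δ : ℝ}

theorem sq_epsl (hL : 0 ≤ (d : ℝ) + log (1 / δ)) :
    epsl d m n θs σ δ ^ 2 = (‖θs‖ ^ 2 + σ ^ 2) * (((d : ℝ) + log (1 / δ)) / ((m * n : ℕ) : ℝ)) := by
  rw [epsl, mul_pow, sq_sqrt (by positivity), sq_sqrt (by positivity)]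

theorem epsl_pos (hσ : σ ≠ 0) (hmn : 0 < m * n) (hL : 0 < (d : ℝ) + log (1 / δ)) :
    0 < epsl d m n θs σ δ := by
  have : (0 : ℝ) < ((m * n : ℕ) : ℝ) := by exact_mod_cast hmn
  unfold epsl
  positivity

theorem iterationCount_log_arg_eq {Cε : ℝ} (hσ : σ ≠ 0) (hmn : 0 < m * n)
    (hL : 0 < (d : ℝ) + log (1 / δ)) (hCε : Cε ≠ 0) :
    ((m * n : ℕ) : ℝ) * ‖θs‖ ^ 2 / (28 * Cε * (‖θs‖ ^ 2 + σ ^ 2) * ((d : ℝ) + log (1 / δ))) =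
      (‖θs‖ / 14 / (2 * (Cε * epsl d m n θs σ δ))) ^ 2 * (28 * Cε) := by
  have hN : (0 : ℝ) < ((m * n : ℕ) : ℝ) := by exact_mod_cast hmn
  have hε := epsl_pos (θs := θs) hσ hmn hL
  rw [div_pow, mul_pow, mul_pow, sq_epsl hL.le]
  field_simp
  ring

end Accuracy

theorem empirical_EM_main_general
    (d m n : ℕ) (hm : 1 ≤ m) (hn : 0 < n)
    (θs : Vec d) (hθs : θs ≠ 0) (σ : ℝ) (hσ : 0 < σ)
    (δ : ℝ) (hδ0 : 0 < δ) (hδ1 : δ < 1)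
    (Cκ Cε : ℝ) (hCκ : 0 < Cκ) (hCε : 1 ≤ Cε)
    -- (a) the population EM map is a contraction with factor `exp(−Cκ n) ≤ 1/2`
    (ha1 : Real.exp (-Cκ * n) ≤ 1 / 2)
    (ha2 : ∀ θ : Vec d, epsl d m n θs σ δ ≤ ‖θ - θs‖ → ‖θ - θs‖ ≤ ‖θs‖ / 14 →
      ‖Mpop d n hn θs σ θ - θs‖ ≤ Real.exp (-Cκ * n) * ‖θ - θs‖)
    -- (b) uniform generalization bound on the shell, with probability at least `1 − δ`
    (hb : ENNReal.ofReal (1 - δ) ≤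
      multiMeasure d m n σ
        {ω | IsUnit (covM ω).det ∧
          ∀ θ : Vec d, epsl d m n θs σ δ ≤ ‖θ - θs‖ → ‖θ - θs‖ ≤ ‖θs‖ / 14 →
            ‖Mm θs σ ω θ - Mpop d n hn θs σ θ‖ ≤ Cε * epsl d m n θs σ δ})
    -- (c)
    (hc : 4 * Cε * epsl d m n θs σ δ ≤ ‖θs‖ / 14 / 2)
    (θ₀ : Vec d) (hθ₀ : ‖θ₀ - θs‖ ≤ ‖θs‖ / 14)
    (T : ℕ)
    (hT : T = ⌈1 + 1 / (2 * Cκ * n) *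
      Real.log (((m * n : ℕ) : ℝ) * ‖θs‖ ^ 2 /
        (28 * Cε * (‖θs‖ ^ 2 + σ ^ 2) * ((d : ℝ) + Real.log (1 / δ))))⌉₊) :
    ENNReal.ofReal (1 - δ) ≤
      multiMeasure d m n σ
        {ω | (∃ t ≤ T, ‖EMseq θs σ θ₀ ω t - θs‖ ≤ epsl d m n θs σ δ) ∨
          ‖EMseq θs σ θ₀ ω T - θs‖ ≤ 4 * Cε * epsl d m n θs σ δ} := by
  set ε := epsl d m n θs σ δ
  set κ := exp (-Cκ * n)
  have hL : 0 < (d : ℝ) + log (1 / δ) := by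
    have := log_pos (one_lt_one_div hδ0 hδ1)
    positivity
  have hmn : 0 < m * n := Nat.mul_pos hm hn
  have hη : 0 < Cε * ε := mul_pos (by linarith) (epsl_pos hσ.ne' hmn hL)
  have hκ0 : 0 ≤ κ := (exp_pos _).le
  have hκT : κ ^ T * (‖θs‖ / 14) ≤ 2 * (Cε * ε) := by
    rw [show κ = exp (-(Cκ * n)) by simp only [κ, neg_mul]]
    refine exp_neg_pow_mul_le (by positivity) ?_
    rw [hT, iterationCount_log_arg_eq hσ.ne' hmn hL (by linarith), mul_assoc 2]
    have := norm_pos_iff.2 hθs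
    exact log_le_mul_natCeil (by positivity) (by positivity) (by linarith)
  refine hb.trans (measure_mono fun ω ⟨_, hFG⟩ => or_iff_not_imp_left.2 fun hfar => ?_)
  push Not at hfar
  calc ‖EMseq θs σ θ₀ ω T - θs‖ ≤ κ ^ T * (‖θs‖ / 14) + Cε * ε / (1 - κ) :=
        norm_sub_le_of_perturbed_contraction (x := EMseq θs σ θ₀ ω) (fun _ => rfl) hκ0
          (by linarith) hη.le (by nlinarith [norm_nonneg θs]) ha2 hFG hθ₀
          fun t ht => (hfar t ht.le).le
    _ ≤ 2 * (Cε * ε) + 2 * (Cε * ε) := by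
        gcongr
        rw [div_le_iff₀ (by linarith)]
        nlinarith
    _ = 4 * Cε * ε := by ring

/-- **Theorem 4 (main theorem): constant iteration complexity of empirical EM.** -/
theorem empirical_EM_main
    (d m n : ℕ) (hd : 1 ≤ d) (hm : 1 ≤ m) (hn : 0 < n)
    (θs : Vec d) (hθs : θs ≠ 0) (σ : ℝ) (hσ : 0 < σ)
    (hsnr : 4 ≤ ‖θs‖ / σ)
    (δ : ℝ) (hδ0 : 0 < δ) (hδ1 : δ < 1)
    (hmn : (192 : ℝ) ^ 2 * ((d : ℝ) + Real.log (8 / δ)) ≤ ((m * n : ℕ) : ℝ))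
    (hnlarge : 64 * Real.log m + 104 * (2 * (d : ℝ) + Real.log (4 / δ)) ≤ (n : ℝ))
    (Cκ Cε : ℝ) (hCκ : 0 < Cκ) (hCε : 1 ≤ Cε)
    -- (a) the population EM map is a contraction with factor `exp(−Cκ n) ≤ 1/2`
    (ha1 : Real.exp (-Cκ * n) ≤ 1 / 2)
    (ha2 : ∀ θ : Vec d, epsl d m n θs σ δ ≤ ‖θ - θs‖ → ‖θ - θs‖ ≤ ‖θs‖ / 14 →
      ‖Mpop d n hn θs σ θ - θs‖ ≤ Real.exp (-Cκ * n) * ‖θ - θs‖)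
    -- (b) uniform generalization bound on the shell, with probability at least `1 − δ`
    (hb : ENNReal.ofReal (1 - δ) ≤
      multiMeasure d m n σ
        {ω | IsUnit (covM ω).det ∧
          ∀ θ : Vec d, epsl d m n θs σ δ ≤ ‖θ - θs‖ → ‖θ - θs‖ ≤ ‖θs‖ / 14 →
            ‖Mm θs σ ω θ - Mpop d n hn θs σ θ‖ ≤ Cε * epsl d m n θs σ δ})
    -- (c)
    (hc : 4 * Cε * epsl d m n θs σ δ ≤ ‖θs‖ / 14 / 2)
    (θ₀ : Vec d) (hθ₀ : ‖θ₀ - θs‖ ≤ ‖θs‖ / 14)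
    (T : ℕ)
    (hT : T = ⌈1 + 1 / (2 * Cκ * n) *
      Real.log (((m * n : ℕ) : ℝ) * ‖θs‖ ^ 2 /
        (28 * Cε * (‖θs‖ ^ 2 + σ ^ 2) * ((d : ℝ) + Real.log (1 / δ))))⌉₊) :
    ENNReal.ofReal (1 - δ) ≤
      multiMeasure d m n σ
        {ω | (∃ t ≤ T, ‖EMseq θs σ θ₀ ω t - θs‖ ≤ epsl d m n θs σ δ) ∨
          ‖EMseq θs σ θ₀ ω T - θs‖ ≤ 4 * Cε * epsl d m n θs σ δ} :=
  empirical_EM_main_general d m n hm hn θs hθs σ hσ δ hδ0 hδ1 Cκ Cε hCκ hCε ha1 ha2 hb hc θ₀ hθ₀ T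
    hT
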